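/- Let G be a group generated by a finite set {g_1, ..., g_n}. Then G has Kazhdan's property (T) if and only if for every unitary representation π of G on a complex Hilbert space, the condition that z_0 I + z_1π(g_1) + ⋯ + z_nπ(g_n) is not invertible for every nonzero z ∈ ℂ^{n+1} with z_0 + ⋯ + z_n = 0 (i.e., H_0 ⊆ p(A_π)) implies that π has a nonzero invariant vector (a nonzero ξ with π(g)ξ = ξ for all g ∈ G). -/

import Mathlib

/-!
If the pencil is singular on `H₀`, take `z = (n, -1, …, -1)`: then `A = ∑ᵢ (1 - π(gᵢ))` is not
invertible, so `0` lies in the closure of its numerical range. Since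
`2 Re ⟪Aξ, ξ⟫ = ∑ᵢ ‖π(gᵢ)ξ - ξ‖²`, the generators almost fix some unit vector, and a word-length
bound spreads this to every finite subset of `G`; property (T) then yields an invariant vector.
Conversely, for `z ∈ H₀` the pencil equals `∑ᵢ zᵢ (π(gᵢ) - 1)`, which is small on almost
invariant unit vectors, so it cannot be invertible.
-/

/-- A unitary representation of a group `G` on a complex Hilbert space. -/
structure UnitaryRep (G : Type) [Group G] where
  /-- the underlying Hilbert space -/
  space : Type
  [ngroup : NormedAddCommGroup space]
  [ips : InnerProductSpace ℂ space]
  [complete : CompleteSpace space]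
  /-- the representation -/
  rep : G →* (space →L[ℂ] space)
  mem_unitary : ∀ x : G, rep x ∈ unitary (space →L[ℂ] space)

attribute [instance] UnitaryRep.ngroup UnitaryRep.ips UnitaryRep.complete

/-- A unitary representation almost has invariant vectors (equivalently, it weakly contains the
trivial representation). -/
def UnitaryRep.AlmostInv {G : Type} [Group G] (ρ : UnitaryRep G) : Prop :=
  ∀ (F : Finset G) (ε : ℝ), 0 < ε → ∃ ξ : ρ.space, ‖ξ‖ = 1 ∧ ∀ s ∈ F, ‖ρ.rep s ξ - ξ‖ < ε

/-- A group has Kazhdan's property (T) if every unitary representation that almost has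
invariant vectors has a nonzero invariant vector. -/
def HasPropertyT (G : Type) [Group G] : Prop :=
  ∀ ρ : UnitaryRep G, ρ.AlmostInv → ∃ ξ : ρ.space, ξ ≠ 0 ∧ ∀ x : G, ρ.rep x ξ = ξ

open ContinuousLinearMap RCLike
open scoped InnerProductSpace

theorem not_isUnit_of_forall_exists_norm_apply_lt {𝕜 E : Type*} [NontriviallyNormedField 𝕜]
    [NormedAddCommGroup E] [NormedSpace 𝕜 E] {T : E →L[𝕜] E}
    (h : ∀ ε > 0, ∃ ξ : E, ‖ξ‖ = 1 ∧ ‖T ξ‖ < ε) : ¬IsUnit T := by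
  intro hT
  obtain ⟨B, hB⟩ := hT.exists_left_inv
  obtain ⟨ξ, hξ, hlt⟩ := h (‖B‖ + 1)⁻¹ (by positivity)
  refine lt_irrefl (1 : ℝ) ?_
  calc
    1 = ‖B (T ξ)‖ := by rw [← mul_apply_eq_comp, hB, one_apply_eq_self, hξ]
    _ ≤ ‖B‖ * ‖T ξ‖ := B.le_opNorm _
    _ ≤ ‖B‖ * (‖B‖ + 1)⁻¹ := by gcongr
    _ < 1 := by rw [mul_inv_lt_iff₀ (by positivity)]; linarith

section InnerProductSpace

variable {𝕜 H : Type*} [RCLike 𝕜] [NormedAddCommGroup H] [InnerProductSpace 𝕜 H]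

theorem norm_sub_sq_eq_two_mul_re_inner {u x : H} (h : ‖u‖ = ‖x‖) :
    ‖u - x‖ ^ 2 = 2 * re ⟪x - u, x⟫_𝕜 := by
  rw [norm_sub_sq (𝕜 := 𝕜), inner_sub_left, map_sub, inner_self_eq_norm_sq, h,
    ← inner_conj_symm u x, conj_re]
  ring

theorem exists_norm_eq_one_norm_inner_lt_of_not_isUnit [CompleteSpace H] {T : H →L[𝕜] H}
    (hT : ¬IsUnit T) {ε : ℝ} (hε : 0 < ε) : ∃ ξ : H, ‖ξ‖ = 1 ∧ ‖⟪T ξ, ξ⟫_𝕜‖ < ε := by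
  obtain ⟨x, hx⟩ : ∃ x : H, ‖⟪T x, x⟫_𝕜‖ < ‖x‖ ^ 2 * ε := by
    by_contra! h
    exact hT <| isUnit_of_forall_le_norm_inner_map T (c := ε.toNNReal) (by simpa using hε)
      (by simpa [hε.le] using h)
  have hx0 : x ≠ 0 := by rintro rfl; simp at hx
  refine ⟨(‖x‖⁻¹ : 𝕜) • x, norm_smul_inv_norm hx0, ?_⟩
  rw [map_smul, inner_smul_left, inner_smul_right, norm_mul, norm_mul, norm_conj, norm_inv,
    norm_algebraMap', norm_norm, ← mul_assoc, ← mul_inv, ← sq]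
  rwa [inv_mul_lt_iff₀ (by positivity)]

theorem exists_forall_norm_apply_sub_lt_of_not_isUnit_sum_one_sub [CompleteSpace H] {ι : Type*}
    [Fintype ι] {U : ι → H →L[𝕜] H} (hU : ∀ i x, ‖U i x‖ = ‖x‖) (hA : ¬IsUnit (∑ i, (1 - U i)))
    {δ : ℝ} (hδ : 0 < δ) : ∃ ξ : H, ‖ξ‖ = 1 ∧ ∀ i, ‖U i ξ - ξ‖ < δ := by
  obtain ⟨ξ, hξ, hlt⟩ :=
    exists_norm_eq_one_norm_inner_lt_of_not_isUnit hA (ε := δ ^ 2 / 2) (by positivity)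
  refine ⟨ξ, hξ, fun i => lt_of_pow_lt_pow_left₀ 2 hδ.le ?_⟩
  have hsum : ∑ j, ‖U j ξ - ξ‖ ^ 2 = 2 * re ⟪(∑ j, (1 - U j)) ξ, ξ⟫_𝕜 := by
    simp only [sum_apply, sub_apply, one_apply_eq_self, sum_inner, map_sum, Finset.mul_sum]
    exact Finset.sum_congr rfl fun j _ => norm_sub_sq_eq_two_mul_re_inner (hU j ξ)
  calc ‖U i ξ - ξ‖ ^ 2 ≤ ∑ j, ‖U j ξ - ξ‖ ^ 2 :=
        Finset.single_le_sum (f := fun j => ‖U j ξ - ξ‖ ^ 2) (fun j _ => by positivity)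
          (Finset.mem_univ i)
    _ = 2 * re ⟪(∑ j, (1 - U j)) ξ, ξ⟫_𝕜 := hsum
    _ ≤ 2 * ‖⟪(∑ j, (1 - U j)) ξ, ξ⟫_𝕜‖ := by gcongr; exact re_le_norm _
    _ < δ ^ 2 := by linarith

end InnerProductSpace

theorem smul_add_sum_smul_eq_sum_smul_sub {R M : Type*} [Ring R] [AddCommGroup M] [Module R M]
    {n : ℕ} (z : Fin (n + 1) → R) (e : M) (a : Fin n → M) (hz : ∑ i, z i = 0) :
    z 0 • e + ∑ i, z i.succ • a i = ∑ i, z i.succ • (a i - e) := by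
  rw [Fin.sum_univ_succ, add_eq_zero_iff_eq_neg] at hz
  simp only [hz, smul_sub, Finset.sum_sub_distrib, ← Finset.sum_smul, neg_smul]
  abel

namespace UnitaryRep

variable {G : Type} [Group G] (ρ : UnitaryRep G)

theorem norm_rep_apply (s : G) (ξ : ρ.space) : ‖ρ.rep s ξ‖ = ‖ξ‖ :=
  norm_map_of_mem_unitary (ρ.mem_unitary s) ξ

theorem norm_rep_mul_apply_sub_le (s t : G) (ξ : ρ.space) :
    ‖ρ.rep (s * t) ξ - ξ‖ ≤ ‖ρ.rep s ξ - ξ‖ + ‖ρ.rep t ξ - ξ‖ :=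
  calc ‖ρ.rep (s * t) ξ - ξ‖ = ‖ρ.rep s (ρ.rep t ξ - ξ) + (ρ.rep s ξ - ξ)‖ := by
        rw [map_mul, mul_apply_eq_comp, map_sub, sub_add_sub_cancel]
    _ ≤ ‖ρ.rep s (ρ.rep t ξ - ξ)‖ + ‖ρ.rep s ξ - ξ‖ := norm_add_le _ _
    _ = ‖ρ.rep s ξ - ξ‖ + ‖ρ.rep t ξ - ξ‖ := by rw [norm_rep_apply, add_comm]

theorem norm_rep_inv_apply_sub (s : G) (ξ : ρ.space) :
    ‖ρ.rep s⁻¹ ξ - ξ‖ = ‖ρ.rep s ξ - ξ‖ := by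
  rw [← ρ.norm_rep_apply s, map_sub, ← mul_apply_eq_comp, ← map_mul, mul_inv_cancel, map_one,
    one_apply_eq_self, norm_sub_rev]

theorem exists_nat_norm_rep_apply_sub_le {ι : Type*} {g : ι → G} {s : G}
    (hs : s ∈ Subgroup.closure (Set.range g)) :
    ∃ N : ℕ, ∀ (δ : ℝ) (ξ : ρ.space), (∀ i, ‖ρ.rep (g i) ξ - ξ‖ ≤ δ) →
      ‖ρ.rep s ξ - ξ‖ ≤ N * δ := by
  induction hs using Subgroup.closure_induction with
  | mem x hx =>
    obtain ⟨i, rfl⟩ := hx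
    exact ⟨1, fun δ ξ h => by simpa using h i⟩
  | one => exact ⟨0, fun δ ξ _ => by simp⟩
  | mul x y _ _ ihx ihy =>
    obtain ⟨M, hM⟩ := ihx
    obtain ⟨N, hN⟩ := ihy
    refine ⟨M + N, fun δ ξ h => ?_⟩
    push_cast
    linarith [ρ.norm_rep_mul_apply_sub_le x y ξ, hM δ ξ h, hN δ ξ h]
  | inv x _ ih =>
    obtain ⟨N, hN⟩ := ih
    exact ⟨N, fun δ ξ h => (ρ.norm_rep_inv_apply_sub x ξ).trans_le (hN δ ξ h)⟩

theorem almostInv_of_generators {ι : Type*} {g : ι → G}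
    (hg : Subgroup.closure (Set.range g) = ⊤)
    (h : ∀ δ > 0, ∃ ξ : ρ.space, ‖ξ‖ = 1 ∧ ∀ i, ‖ρ.rep (g i) ξ - ξ‖ < δ) : ρ.AlmostInv := by
  intro F ε hε
  choose N hN using fun s => ρ.exists_nat_norm_rep_apply_sub_le (hg ▸ Subgroup.mem_top s)
  set M : ℝ := ∑ s ∈ F, (N s : ℝ) + 1
  have hM : 0 < M := by positivity
  obtain ⟨ξ, hξ, hsmall⟩ := h (ε / M) (by positivity)
  refine ⟨ξ, hξ, fun s hs => ?_⟩
  have hNs : (N s : ℝ) < M :=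
    (Finset.single_le_sum (fun t _ => Nat.cast_nonneg (N t)) hs).trans_lt (lt_add_one _)
  calc ‖ρ.rep s ξ - ξ‖ ≤ N s * (ε / M) := hN s _ ξ fun i => (hsmall i).le
    _ < M * (ε / M) := by gcongr
    _ = ε := by field_simp

theorem AlmostInv.exists_norm_sum_smul_sub_one_apply_lt {ρ : UnitaryRep G} (hρ : ρ.AlmostInv)
    {ι : Type*} [Fintype ι] (g : ι → G) (c : ι → ℂ) {ε : ℝ} (hε : 0 < ε) :
    ∃ ξ : ρ.space, ‖ξ‖ = 1 ∧ ‖(∑ i, c i • (ρ.rep (g i) - 1)) ξ‖ < ε := by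
  classical
  set C : ℝ := ∑ i, ‖c i‖ + 1
  have hC : 0 < C := by positivity
  obtain ⟨ξ, hξ, hsmall⟩ := hρ (Finset.univ.image g) (ε / C) (by positivity)
  refine ⟨ξ, hξ, ?_⟩
  calc ‖(∑ i, c i • (ρ.rep (g i) - 1)) ξ‖ = ‖∑ i, c i • (ρ.rep (g i) ξ - ξ)‖ := by
        simp only [sum_apply, smul_apply, sub_apply, one_apply_eq_self]
    _ ≤ ∑ i, ‖c i‖ * ‖ρ.rep (g i) ξ - ξ‖ := norm_sum_le_of_le _ fun i _ => (norm_smul _ _).le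
    _ ≤ ∑ i, ‖c i‖ * (ε / C) := by
        gcongr with i
        exact (hsmall _ (Finset.mem_image_of_mem g (Finset.mem_univ i))).le
    _ < C * (ε / C) := by rw [← Finset.sum_mul]; gcongr; linarith
    _ = ε := by field_simp

end UnitaryRep

/-- A finitely generated group `G = ⟨g₁, ..., gₙ⟩` has Kazhdan's property (T) iff for every
unitary representation `π`, the inclusion `H₀ ⊆ p(A_π)` (the pencil
`z₀I + z₁π(g₁) + ⋯ + zₙπ(gₙ)` is not invertible for every nonzero `z` with
`z₀ + ⋯ + zₙ = 0`) implies that `π` has a nonzero invariant vector. -/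
theorem stmt13 {G : Type} [Group G] (n : ℕ) (hn : 0 < n) (g : Fin n → G)
    (hgen : Subgroup.closure (Set.range g) = ⊤) :
    HasPropertyT G ↔
      ∀ ρ : UnitaryRep G,
        (∀ z : Fin (n + 1) → ℂ, z ≠ 0 → ∑ i, z i = 0 →
          ¬ IsUnit (z 0 • (1 : ρ.space →L[ℂ] ρ.space) +
            ∑ i : Fin n, z i.succ • ρ.rep (g i))) →
        ∃ ξ : ρ.space, ξ ≠ 0 ∧ ∀ x : G, ρ.rep x ξ = ξ := by
  constructor
  · intro hT ρ hpencil
    set z : Fin (n + 1) → ℂ := Fin.cons (n : ℂ) fun _ => -1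
    have hz : ∑ i, z i = 0 := by simp [z, Fin.sum_cons]
    have hz0 : z ≠ 0 := fun h => by simpa [z, hn.ne'] using congrFun h 0
    have hA : ¬IsUnit (∑ i, (1 - ρ.rep (g i))) := by
      convert hpencil z hz0 hz using 2
      rw [smul_add_sum_smul_eq_sum_smul_sub z _ _ hz]
      simp [z]
    exact hT ρ <| ρ.almostInv_of_generators hgen fun δ hδ =>
      exists_forall_norm_apply_sub_lt_of_not_isUnit_sum_one_sub (fun i => ρ.norm_rep_apply (g i))
        hA hδ
  · intro h ρ hρ
    refine h ρ fun z _ hz => ?_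
    rw [smul_add_sum_smul_eq_sum_smul_sub z _ _ hz]
    exact not_isUnit_of_forall_exists_norm_apply_lt fun ε hε =>
      hρ.exists_norm_sum_smul_sub_one_apply_lt g _ hε
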